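/- Let p ∈ ℂ[z₁,…,z_d] have total degree n, no zeros in the open polydisk 𝔻^d, and vanish to order exactly M at the point u = (1,…,1), so that p(u − ζ) = Σ_{j=M}^{n} P_j(ζ) where each P_j is homogeneous of degree j and P_M ≠ 0. Then P_M has no zeros in (RHP)^d, the product of open right half-planes. -/

import Mathlib

/-!
For `ζ` in the right half-plane and small `t > 0` the point `u - tζ` lies in the polydisk, so
`t⁻ᴹ p(u - tζ) = ∑ⱼ tʲ⁻ᴹ Pⱼ(ζ)` has no zeros on `RHPᵈ`, and as `t → 0⁺` these polynomials
converge locally uniformly to `P_M`. If `P_M(ζ₀) = 0`, restrict everything to a complex line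
through `ζ₀` on which `P_M` does not vanish identically: on a small circle around `ζ₀` the
restriction of `P_M` has no zeros, and Hurwitz's theorem forces `P_M(ζ₀) ≠ 0`.
-/

open MvPolynomial Filter Topology Metric Set

theorem Complex.le_norm_of_forall_mem_frontier_le_norm {E : Type*} [NormedAddCommGroup E]
    [NormedSpace ℂ E] [Nontrivial E] {f : E → ℂ} {U : Set E} (hU : Bornology.IsBounded U)
    (hd : DiffContOnCl ℂ f U) (h₀ : ∀ z ∈ closure U, f z ≠ 0) {m : ℝ} (hm : 0 < m)
    (hfm : ∀ z ∈ frontier U, m ≤ ‖f z‖) {z : E} (hz : z ∈ closure U) : m ≤ ‖f z‖ := by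
  have hinv : ‖(f z)⁻¹‖ ≤ m⁻¹ :=
    Complex.norm_le_of_forall_mem_frontier_norm_le hU (hd.inv h₀) (fun w hw => by
      rw [Pi.inv_apply, norm_inv]; exact inv_anti₀ hm (hfm w hw)) hz
  rw [norm_inv] at hinv
  exact (inv_le_inv₀ (norm_pos_iff.mpr (h₀ z hz)) hm).mp hinv

/-- Hurwitz's theorem. -/
theorem Complex.ne_zero_of_tendstoUniformlyOn_closedBall {ι : Type*} {l : Filter ι} [l.NeBot]
    {F : ι → ℂ → ℂ} {f : ℂ → ℂ} {c : ℂ} {r : ℝ}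
    (hF : TendstoUniformlyOn F f l (closedBall c r))
    (hFd : ∀ᶠ i in l, DiffContOnCl ℂ (F i) (ball c r) ∧ ∀ z ∈ closedBall c r, F i z ≠ 0)
    (hr : 0 < r) (hfr : ∀ z ∈ sphere c r, f z ≠ 0) {z : ℂ} (hz : z ∈ closedBall c r) :
    f z ≠ 0 := by
  have hf : ContinuousOn f (closedBall c r) := hF.continuousOn <| hFd.frequently.mono
    fun i hi => by simpa [closure_ball c hr.ne'] using hi.1.continuousOn
  obtain ⟨z₀, hz₀, hmin⟩ := (isCompact_sphere c r).exists_isMinOn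
    (NormedSpace.sphere_nonempty.mpr hr.le) (hf.mono sphere_subset_closedBall).norm
  set m := ‖f z₀‖
  have hm : 0 < m := norm_pos_iff.mpr (hfr z₀ hz₀)
  obtain ⟨i, hclose, hdiff, hne⟩ :=
    ((Metric.tendstoUniformlyOn_iff.mp hF (m / 2) (half_pos hm)).and hFd).exists
  have hsphere : ∀ w ∈ sphere c r, m / 2 ≤ ‖F i w‖ := fun w hw => by
    have hdist := hclose w (sphere_subset_closedBall hw)
    have hmw : m ≤ ‖f w‖ := hmin hw
    rw [dist_eq_norm] at hdist
    linarith [norm_sub_norm_le (f w) (F i w)]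
  have hcentre : m / 2 ≤ ‖F i z‖ :=
    Complex.le_norm_of_forall_mem_frontier_le_norm isBounded_ball hdiff
      (by simpa [closure_ball c hr.ne'] using hne) (half_pos hm)
      (by simpa [frontier_ball c hr.ne'] using hsphere) (by rwa [closure_ball c hr.ne'])
  have hdist := hclose z hz
  rw [dist_comm, dist_eq_norm] at hdist
  exact norm_pos_iff.mp (by linarith [norm_sub_norm_le (F i z) (f z)])

theorem AnalyticOnNhd.exists_sphere_ne_zero {f : ℂ → ℂ} (hf : AnalyticOnNhd ℂ f univ) {a : ℂ}
    (ha : f a ≠ 0) {c : ℂ} {U : Set ℂ} (hU : U ∈ 𝓝 c) :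
    ∃ r > 0, closedBall c r ⊆ U ∧ ∀ z ∈ sphere c r, f z ≠ 0 := by
  have hne : ∀ᶠ z in 𝓝[≠] c, f z ≠ 0 :=
    (hf c trivial).eventually_eq_zero_or_eventually_ne_zero.resolve_left fun h =>
      ha (hf.eqOn_zero_of_preconnected_of_eventuallyEq_zero isPreconnected_univ trivial h trivial)
  obtain ⟨ε, hε, hball⟩ :=
    Metric.eventually_nhds_iff_ball.mp ((eventually_nhdsWithin_iff.mp hne).and hU)
  refine ⟨ε / 2, half_pos hε, fun z hz => (hball z ?_).2, fun z hz => (hball z ?_).1 ?_⟩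
  · exact closedBall_subset_ball (half_lt_self hε) hz
  · exact sphere_subset_ball (half_lt_self hε) hz
  · rintro rfl
    simp at hz
    linarith

/-- `‖1 - t z‖² = 1 - 2t Re z + t² ‖z‖²`, and `Re z / ‖z‖² = Re z⁻¹`. -/
theorem Complex.norm_one_sub_mul_lt_one {z : ℂ} {t : ℝ} (ht : 0 < t) (h : t < 2 * z⁻¹.re) :
    ‖1 - t * z‖ < 1 := by
  have hz : z ≠ 0 := by rintro rfl; simp at h; linarith
  rw [Complex.inv_re, mul_div_assoc', lt_div_iff₀ (Complex.normSq_pos.mpr hz),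
    Complex.normSq_apply] at h
  rw [← sq_lt_one_iff₀ (norm_nonneg _), Complex.sq_norm, Complex.normSq_apply]
  simp only [Complex.sub_re, Complex.sub_im, Complex.mul_re, Complex.mul_im, Complex.ofReal_re,
    Complex.ofReal_im, Complex.one_re, Complex.one_im]
  nlinarith

theorem Complex.eventually_forall_norm_one_sub_mul_lt_one {K : Set ℂ} (hK : IsCompact K)
    (hre : ∀ z ∈ K, 0 < z.re) : ∀ᶠ t : ℝ in 𝓝[>] 0, ∀ z ∈ K, ‖1 - t * z‖ < 1 := by
  rcases K.eq_empty_or_nonempty with rfl | hKne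
  · simp
  have hcont : ContinuousOn (fun z : ℂ => z⁻¹.re) K := fun z hz =>
    (Complex.continuous_re.continuousAt.comp
      (continuousAt_inv₀ fun h => by simpa [h] using hre z hz)).continuousWithinAt
  obtain ⟨z₀, hz₀, hmin⟩ := hK.exists_isMinOn hKne hcont
  have hδ : 0 < z₀⁻¹.re := by
    rw [Complex.inv_re]
    exact div_pos (hre z₀ hz₀) (Complex.normSq_pos.mpr fun h => by simpa [h] using hre z₀ hz₀)
  filter_upwards [Ioo_mem_nhdsGT (mul_pos two_pos hδ)] with t ht z hz
  have : z₀⁻¹.re ≤ z⁻¹.re := hmin hz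
  exact Complex.norm_one_sub_mul_lt_one ht.1 (by linarith [ht.2])

theorem MvPolynomial.IsHomogeneous.eval_smul {R σ : Type*} [CommSemiring R]
    {φ : MvPolynomial σ R} {n : ℕ} (hφ : φ.IsHomogeneous n) (c : R) (x : σ → R) :
    eval (c • x) φ = c ^ n * eval x φ := by
  rw [eval_eq, eval_eq, Finset.mul_sum]
  refine Finset.sum_congr rfl fun m hm => ?_
  have hdeg : ∑ i ∈ m.support, m i = n := by
    rw [← Finsupp.degree_apply, Finsupp.degree_eq_weight_one]
    exact hφ (mem_support_iff.mp hm)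
  simp only [Pi.smul_apply, smul_eq_mul, mul_pow, Finset.prod_mul_distrib,
    Finset.prod_pow_eq_pow_sum, hdeg]
  ring

theorem MvPolynomial.differentiable_eval {𝕜 σ : Type*} [NontriviallyNormedField 𝕜]
    [CompleteSpace 𝕜] [Fintype σ] (φ : MvPolynomial σ 𝕜) :
    Differentiable 𝕜 fun x : σ → 𝕜 => eval x φ := fun x =>
  (AnalyticOnNhd.eval_mvPolynomial φ x (mem_univ x)).differentiableAt

theorem Continuous.tendstoUniformlyOn_of_isCompact {α β E : Type*} [TopologicalSpace α]
    [TopologicalSpace β] [UniformSpace E] {F : α → β → E} (hF : Continuous ↿F) {K : Set β}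
    (hK : IsCompact K) (q : α) : TendstoUniformlyOn F (F q) (𝓝 q) K := fun u hu => by
  obtain ⟨v, hv, hvu⟩ :=
    hK.mem_uniformity_of_prod hF.continuousOn (mem_univ q) (symm_le_uniformity hu)
  rw [nhdsWithin_univ] at hv
  exact mem_of_superset hv fun p hp x hx => hvu p hp x hx

/-- For `t ≠ 0` and `P j = 0` for `j < M` this is `t⁻ᴹ ∑ⱼ tʲ Pⱼ(ζ)`; the truncated exponent
`j - M` makes it a polynomial in `t`, equal to `P_M(ζ)` at `t = 0`. -/
noncomputable def rescaledExpansion {d : ℕ} (P : ℕ → MvPolynomial (Fin d) ℂ) (M N : ℕ) (t : ℂ)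
    (ζ : Fin d → ℂ) : ℂ :=
  ∑ j ∈ Finset.range (N + 1), t ^ (j - M) * eval ζ (P j)

section rescaledExpansion

variable {d : ℕ} (P : ℕ → MvPolynomial (Fin d) ℂ) (M N : ℕ)

theorem continuous_rescaledExpansion :
    Continuous fun q : ℂ × (Fin d → ℂ) => rescaledExpansion P M N q.1 q.2 := by
  unfold rescaledExpansion
  exact continuous_finsetSum _ fun j _ =>
    (continuous_fst.pow _).mul ((continuous_eval (P j)).comp continuous_snd)

theorem differentiable_rescaledExpansion (t : ℂ) :
    Differentiable ℂ (rescaledExpansion P M N t) :=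
  Differentiable.fun_sum fun j _ => (differentiable_const _).mul (differentiable_eval (P j))

variable {P M N}

theorem rescaledExpansion_zero (hlow : ∀ j < M, P j = 0) (hMN : M ≤ N) (ζ : Fin d → ℂ) :
    rescaledExpansion P M N 0 ζ = eval ζ (P M) := by
  rw [rescaledExpansion, Finset.sum_eq_single M]
  · simp
  · intro j _ hjM
    rcases hjM.lt_or_gt with hj | hj
    · simp [hlow j hj]
    · simp [Nat.sub_ne_zero_of_lt hj]
  · simp [Nat.lt_succ_of_le hMN]

theorem pow_mul_rescaledExpansion (hhom : ∀ j, (P j).IsHomogeneous j)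
    (hlow : ∀ j < M, P j = 0) (t : ℂ) (ζ : Fin d → ℂ) :
    t ^ M * rescaledExpansion P M N t ζ = ∑ j ∈ Finset.range (N + 1), eval (t • ζ) (P j) := by
  rw [rescaledExpansion, Finset.mul_sum]
  refine Finset.sum_congr rfl fun j _ => ?_
  rw [(hhom j).eval_smul]
  rcases lt_or_ge j M with hj | hj
  · simp [hlow j hj]
  · rw [← mul_assoc, ← pow_add, Nat.add_sub_cancel' hj]

theorem tendstoUniformlyOn_rescaledExpansion (hlow : ∀ j < M, P j = 0) (hMN : M ≤ N)
    {K : Set (Fin d → ℂ)} (hK : IsCompact K) :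
    TendstoUniformlyOn (fun (t : ℝ) ζ => rescaledExpansion P M N t ζ)
      (fun ζ => eval ζ (P M)) (𝓝 0) K := by
  have hF : Continuous ↿fun (t : ℝ) ζ => rescaledExpansion P M N t ζ :=
    (continuous_rescaledExpansion P M N).comp (Complex.continuous_ofReal.prodMap continuous_id)
  simpa [rescaledExpansion_zero hlow hMN] using hF.tendstoUniformlyOn_of_isCompact hK (0 : ℝ)

theorem le_of_eval_zero_ne_zero {p : MvPolynomial (Fin d) ℂ} (hp0 : eval 0 p ≠ 0)
    (hexp : ∀ ζ : Fin d → ℂ,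
      eval (fun i => 1 - ζ i) p = ∑ j ∈ Finset.range (N + 1), eval ζ (P j))
    (hlow : ∀ j < M, P j = 0) : M ≤ N := by
  by_contra! h
  have h1 := hexp 1
  rw [Finset.sum_eq_zero fun j hj => by rw [hlow j (by simp at hj; omega), map_zero]] at h1
  exact hp0 (by simpa using h1)

theorem eventually_rescaledExpansion_ne_zero {p : MvPolynomial (Fin d) ℂ}
    (hp : ∀ z : Fin d → ℂ, (∀ i, ‖z i‖ < 1) → eval z p ≠ 0)
    (hhom : ∀ j, (P j).IsHomogeneous j)
    (hexp : ∀ ζ : Fin d → ℂ,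
      eval (fun i => 1 - ζ i) p = ∑ j ∈ Finset.range (N + 1), eval ζ (P j))
    (hlow : ∀ j < M, P j = 0) {K : Set (Fin d → ℂ)} (hK : IsCompact K)
    (hre : ∀ ζ ∈ K, ∀ i, 0 < (ζ i).re) :
    ∀ᶠ t : ℝ in 𝓝[>] 0, ∀ ζ ∈ K, rescaledExpansion P M N t ζ ≠ 0 := by
  have hdisk := Filter.eventually_all.mpr fun i =>
    Complex.eventually_forall_norm_one_sub_mul_lt_one (hK.image (continuous_apply i))
      (by rintro _ ⟨ζ, hζ, rfl⟩; exact hre ζ hζ i)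
  filter_upwards [hdisk] with t ht ζ hζ hzero
  have key := pow_mul_rescaledExpansion (N := N) hhom hlow (t : ℂ) ζ
  rw [hzero, mul_zero, ← hexp] at key
  exact hp _ (fun i => ht i _ (mem_image_of_mem _ hζ)) key.symm

end rescaledExpansion

theorem stmt4 (d M : ℕ) (p : MvPolynomial (Fin d) ℂ)
    (hp : ∀ z : Fin d → ℂ, (∀ i, ‖z i‖ < 1) → eval z p ≠ 0)
    (P : ℕ → MvPolynomial (Fin d) ℂ)
    (hhom : ∀ j, (P j).IsHomogeneous j)
    (hexp : ∀ ζ : Fin d → ℂ,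
      eval (fun i => 1 - ζ i) p = ∑ j ∈ Finset.range (p.totalDegree + 1), eval ζ (P j))
    (hlow : ∀ j, j < M → P j = 0) (hM : P M ≠ 0) :
    ∀ ζ : Fin d → ℂ, (∀ i, 0 < (ζ i).re) → eval ζ (P M) ≠ 0 := by
  intro ζ₀ hζ₀ hzero
  have hMN : M ≤ p.totalDegree := le_of_eval_zero_ne_zero (hp 0 (by simp)) hexp hlow
  obtain ⟨w, hw⟩ : ∃ w, eval w (P M) ≠ 0 := by simpa using mt MvPolynomial.funext_iff.mpr hM
  set ξ : ℂ → Fin d → ℂ := fun s => ζ₀ + s • (w - ζ₀)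
  have hξ : Differentiable ℂ ξ := by fun_prop
  have hU : ∀ᶠ s in 𝓝 0, ∀ i, 0 < (ξ s i).re := Filter.eventually_all.mpr fun i =>
    continuousAt_const.eventually_lt (Complex.continuous_re.comp
      ((continuous_apply i).comp hξ.continuous)).continuousAt (by simpa [ξ] using hζ₀ i)
  obtain ⟨r, hr, hball, hsphere⟩ := AnalyticOnNhd.exists_sphere_ne_zero
    (fun s _ => (AnalyticOnNhd.eval_mvPolynomial (P M) _ trivial).comp (hξ.analyticAt s))
    (a := 1) (by simpa [ξ] using hw) hU
  have hK : IsCompact (ξ '' closedBall 0 r) := (isCompact_closedBall 0 r).image hξ.continuous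
  refine Complex.ne_zero_of_tendstoUniformlyOn_closedBall (l := 𝓝[>] (0 : ℝ))
    (F := fun t s => rescaledExpansion P M p.totalDegree t (ξ s)) ?_ ?_ hr hsphere
    (mem_closedBall_self hr.le) (by simpa [ξ] using hzero)
  · exact fun u hu => nhdsWithin_le_nhds <|
      ((tendstoUniformlyOn_rescaledExpansion hlow hMN hK).comp ξ).mono
        (subset_preimage_image _ _) u hu
  · filter_upwards [eventually_rescaledExpansion_ne_zero hp hhom hexp hlow hK
      (by rintro _ ⟨s, hs, rfl⟩; exact hball hs)] with t ht
    exact ⟨((differentiable_rescaledExpansion P M _ t).comp hξ).diffContOnCl,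
      fun s hs => ht _ (mem_image_of_mem ξ hs)⟩
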